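/- Let τ : A → A⁺ be a one-to-one primitive substitution of constant length p with X_τ infinite. Suppose there exist a ≠ b in A with τ(a) = uav, τ(b) = u'bv', where |u| = |u'| > 0, |v| = |v'|, v ≠ v', and v agrees with v' in at least one position. Then the points x = ...τ²(u)τ(u)u.av τ(v)τ²(v)... and y = ...τ²(u')τ(u')u'.bv' τ(v')τ²(v')... belong to X_τ and form a Li–Yorke pair for the shift. -/

import Mathlib

/-- Extension of a substitution to finite words, by concatenation. -/
def substWord {A : Type*} (τ : A → List A) (w : List A) : List A :=
  (w.map τ).flatten

/-- The shift map on two-sided sequences. -/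
def shift {A : Type*} (x : ℤ → A) : ℤ → A := fun i => x (i + 1)

/-- Extension of a constant-length-`p` substitution to two-sided sequences:
the block `τ(x_q)` occupies coordinates `[pq, pq + p)` of `τ(x)`. -/
def substExt {A : Type*} [Inhabited A] (τ : A → List A) (p : ℕ) (x : ℤ → A) :
    ℤ → A :=
  fun i => (τ (x (i / (p : ℤ)))).getD (i % (p : ℤ)).toNat default

/-- A substitution is primitive if some power sends every letter to a word
containing every letter. -/
def IsPrimitive {A : Type*} (τ : A → List A) : Prop :=
  ∃ n : ℕ, ∀ a b : A, a ∈ (substWord τ)^[n] [b]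

/-- The subshift generated by `τ`: sequences all of whose finite subwords occur
in some `τⁿ(a)`. -/
def XSet {A : Type*} (τ : A → List A) : Set (ℤ → A) :=
  {x | ∀ (i : ℤ) (l : ℕ), ∃ (n : ℕ) (c : A),
    (List.ofFn fun j : Fin l => x (i + (j : ℤ))) <:+: (substWord τ)^[n] [c]}

/-- Proximality of a pair for the shift on `A^ℤ` (with the product topology):
arbitrarily large central windows agree at some arbitrarily late time. -/
def IsProximalPair {A : Type*} (x y : ℤ → A) : Prop :=
  ∀ N M : ℕ, ∃ n : ℕ, M ≤ n ∧ ∀ j : ℤ, |j| ≤ (N : ℤ) → x (j + n) = y (j + n)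

/-- A Li–Yorke pair for the shift on `A^ℤ`: proximal but not asymptotic
(the two sequences differ at infinitely many coordinates). -/
def IsLiYorkePair {A : Type*} (x y : ℤ → A) : Prop :=
  IsProximalPair x y ∧ {m : ℤ | x m ≠ y m}.Infinite

/-!
Since `τ(a) = u a v`, the word `τᵐ⁺¹(a) = τᵐ(u) τᵐ(a) τᵐ(v)` shows that in `x` the block
`τᵐ(v)` follows `τᵐ(a)`, starting at `pᵐ - |u|(1 + p + ⋯ + pᵐ⁻¹)`; as `|u| ≤ p - 2` this
position tends to `+∞`, and `y` carries `τᵐ(v')` at the same place. Injectivity of `τ` gives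
`τᵐ(v) ≠ τᵐ(v')`, hence differences arbitrarily far to the right, while a coincidence
`v_j = v'_j` gives common blocks `τᵐ(v_j)` of length `pᵐ` there, hence proximality. The
windows on which `x` shows `τᵐ(a)` exhaust `ℤ` (as `|u| > 0`), so `x ∈ X_τ`; likewise `y ∈ X_τ`.
-/

open Finset

section SubstWord

variable {A : Type*} (τ : A → List A)

@[simp]
lemma substWord_cons (c : A) (w : List A) : substWord τ (c :: w) = τ c ++ substWord τ w := by
  simp [substWord]

@[simp]
lemma substWord_singleton (c : A) : substWord τ [c] = τ c := by
  simp [substWord]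

@[simp]
lemma substWord_append (w₁ w₂ : List A) :
    substWord τ (w₁ ++ w₂) = substWord τ w₁ ++ substWord τ w₂ := by
  simp [substWord]

lemma iterate_substWord_append (m : ℕ) (w₁ w₂ : List A) :
    (substWord τ)^[m] (w₁ ++ w₂) = (substWord τ)^[m] w₁ ++ (substWord τ)^[m] w₂ := by
  induction m generalizing w₁ w₂ with
  | zero => rfl
  | succ m ih => simp [Function.iterate_succ_apply, ih]

lemma iterate_substWord_succ_singleton (m : ℕ) (c : A) :
    (substWord τ)^[m + 1] [c] = (substWord τ)^[m] (τ c) := by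
  rw [Function.iterate_succ_apply, substWord_singleton]

variable {τ} {p : ℕ}

lemma length_substWord (hlen : ∀ c, (τ c).length = p) (w : List A) :
    (substWord τ w).length = w.length * p := by
  simp [substWord, List.length_flatten, Function.comp_def, hlen, mul_comm]

lemma length_iterate_substWord (hlen : ∀ c, (τ c).length = p) (m : ℕ) (w : List A) :
    ((substWord τ)^[m] w).length = w.length * p ^ m := by
  induction m generalizing w with
  | zero => simp
  | succ m ih =>
    rw [Function.iterate_succ_apply, ih, length_substWord hlen, pow_succ]
    ring

lemma substWord_injective (hp : 0 < p) (hlen : ∀ c, (τ c).length = p)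
    (hinj : Function.Injective τ) : Function.Injective (substWord τ) := by
  intro w₁ w₂ h
  have hl : w₁.length = w₂.length := Nat.eq_of_mul_eq_mul_right hp <| by
    rw [← length_substWord hlen, ← length_substWord hlen, h]
  induction w₁ generalizing w₂ with
  | nil => exact (List.length_eq_zero_iff.mp hl.symm).symm
  | cons c w₁ ih =>
    obtain _ | ⟨c', w₂⟩ := w₂
    · simp at hl
    rw [substWord_cons, substWord_cons] at h
    obtain ⟨hc, hw⟩ := List.append_inj h (by simp [hlen])
    obtain rfl := hinj hc
    rw [ih hw (by simpa using hl)]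

end SubstWord

def OccursAt {A : Type*} (z : ℤ → A) (w : List A) (s : ℤ) : Prop :=
  ∀ (j : ℕ) (hj : j < w.length), z (s + j) = w[j]

namespace OccursAt

variable {A : Type*} {z : ℤ → A} {w w₁ w₂ : List A} {s : ℤ}

lemma of_getD [Inhabited A] (h : ∀ j : ℕ, j < w.length → z (s + j) = w.getD j default) :
    OccursAt z w s := fun j hj => by
  rw [h j hj, List.getD_eq_getElem _ _ hj]

lemma append_left (h : OccursAt z (w₁ ++ w₂) s) : OccursAt z w₁ s := fun j hj => by
  rw [h j (by rw [List.length_append]; omega), List.getElem_append_left hj]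

lemma append_right (h : OccursAt z (w₁ ++ w₂) s) : OccursAt z w₂ (s + w₁.length) :=
  fun j hj => by
    have := h (w₁.length + j) (by rw [List.length_append]; omega)
    rw [List.getElem_append_right (by omega)] at this
    simpa [add_assoc] using this

lemma ofFn_isInfix (h : OccursAt z w s) {i : ℤ} {l : ℕ} (hi : s ≤ i)
    (hil : i + l ≤ s + w.length) : (List.ofFn fun j : Fin l => z (i + j)) <:+: w := by
  obtain ⟨d, rfl⟩ : ∃ d : ℕ, i = s + d := ⟨(i - s).toNat, by omega⟩
  have hword : (List.ofFn fun j : Fin l => z (s + d + j)) = (w.drop d).take l := by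
    apply List.ext_getElem
    · simp only [List.length_ofFn, List.length_take, List.length_drop]
      omega
    · intro j hj _
      simp only [List.getElem_ofFn, List.getElem_take, List.getElem_drop]
      rw [← h (d + j) (by rw [List.length_ofFn] at hj; omega)]
      push_cast
      rw [add_assoc]
  rw [hword]
  exact (List.take_prefix l _).isInfix.trans (List.drop_suffix d w).isInfix

lemma exists_ne {y : ℤ → A} {w' : List A} (hz : OccursAt z w s) (hy : OccursAt y w' s)
    (hl : w.length = w'.length) (hne : w ≠ w') : ∃ j : ℕ, z (s + j) ≠ y (s + j) := by
  by_contra! heq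
  exact hne <| List.ext_getElem hl fun j h₁ h₂ => by rw [← hz j h₁, ← hy j h₂, heq]

lemma iterate_substWord_getElem {τ : A → List A} {p m k : ℕ} (hlen : ∀ c, (τ c).length = p)
    (h : OccursAt z ((substWord τ)^[m] w) s) (hk : k < w.length) :
    OccursAt z ((substWord τ)^[m] [w[k]]) (s + k * p ^ m) := by
  have hw : w = w.take k ++ [w[k]] ++ w.drop (k + 1) := by simp
  rw [hw, iterate_substWord_append, iterate_substWord_append] at h
  have := h.append_left.append_right
  rwa [length_iterate_substWord hlen, List.length_take, min_eq_left hk.le, Nat.cast_mul,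
    Nat.cast_pow] at this

end OccursAt

/-- The length `ℓ (1 + p + ⋯ + pᵐ⁻¹)` of `τᵐ⁻¹(u) ⋯ τ(u) u` when `|u| = ℓ`. -/
def iteratedPrefixLength (ℓ p m : ℕ) : ℤ := ℓ * ∑ i ∈ range m, (p : ℤ) ^ i

section IteratedPrefixLength

variable {ℓ p : ℕ}

lemma iteratedPrefixLength_succ (m : ℕ) :
    iteratedPrefixLength ℓ p (m + 1) = iteratedPrefixLength ℓ p m + ℓ * p ^ m := by
  simp only [iteratedPrefixLength, sum_range_succ, mul_add]

lemma natCast_le_iteratedPrefixLength (hℓ : 0 < ℓ) (hp : 0 < p) (m : ℕ) :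
    (m : ℤ) ≤ iteratedPrefixLength ℓ p m := by
  induction m with
  | zero => simp [iteratedPrefixLength]
  | succ m ih =>
    have : (1 : ℤ) ≤ ℓ * p ^ m := one_le_mul_of_one_le_of_one_le (by omega) (by
      exact_mod_cast Nat.one_le_pow _ _ hp)
    rw [iteratedPrefixLength_succ]
    push_cast
    omega

lemma iteratedPrefixLength_add_lt_pow (hℓp : ℓ + 2 ≤ p) (m : ℕ) :
    iteratedPrefixLength ℓ p m + m < p ^ m := by
  induction m with
  | zero => simp [iteratedPrefixLength]
  | succ m ih =>
    have hpow : (1 : ℤ) ≤ p ^ m := by exact_mod_cast Nat.one_le_pow _ _ (by omega)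
    have hℓ : (ℓ + 2 : ℤ) * p ^ m ≤ p * p ^ m :=
      mul_le_mul_of_nonneg_right (by exact_mod_cast hℓp) (by positivity)
    rw [iteratedPrefixLength_succ, pow_succ]
    push_cast
    nlinarith

end IteratedPrefixLength

section Subshift

variable {A : Type*} {τ : A → List A} {p : ℕ}

lemma mem_XSet_of_occursAt_iterate (hlen : ∀ c, (τ c).length = p) {ℓ : ℕ} (hℓ : 0 < ℓ)
    (hℓp : ℓ + 2 ≤ p) {z : ℤ → A} {c : A}
    (hz : ∀ m, OccursAt z ((substWord τ)^[m] [c]) (-iteratedPrefixLength ℓ p m)) :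
    z ∈ XSet τ := by
  intro i l
  set m := i.natAbs + l
  have hlow := natCast_le_iteratedPrefixLength (p := p) hℓ (by omega) m
  have hhigh := iteratedPrefixLength_add_lt_pow hℓp m
  refine ⟨m, c, (hz m).ofFn_isInfix (by omega) ?_⟩
  rw [length_iterate_substWord hlen, List.length_singleton, one_mul]
  push_cast
  omega

lemma occursAt_iterate_suffix (hlen : ∀ c, (τ c).length = p) {c : A} {w w' : List A}
    (hc : τ c = w ++ c :: w') {z : ℤ → A}
    (hz : ∀ m, OccursAt z ((substWord τ)^[m] [c]) (-iteratedPrefixLength w.length p m))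
    (m : ℕ) : OccursAt z ((substWord τ)^[m] w') (p ^ m - iteratedPrefixLength w.length p m) := by
  have h := hz (m + 1)
  rw [iterate_substWord_succ_singleton, hc, List.append_cons, iterate_substWord_append] at h
  convert h.append_right using 1
  rw [length_iterate_substWord hlen, iteratedPrefixLength_succ, List.length_append,
    List.length_singleton]
  push_cast
  ring

lemma isProximalPair_of_forall_agree {x y : ℤ → A}
    (h : ∀ m : ℕ, ∃ s : ℤ, m ≤ s ∧ ∀ k : ℕ, k ≤ m → x (s + k) = y (s + k)) :
    IsProximalPair x y := by
  intro N M
  obtain ⟨s, hs, hagree⟩ := h (M + 2 * N)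
  refine ⟨(s + N).toNat, by omega, fun j hj => ?_⟩
  have := hagree (N + j).toNat (by rw [abs_le] at hj; omega)
  convert this using 2 <;> rw [abs_le] at hj <;> omega

lemma infinite_setOf_ne_of_forall_exists {x y : ℤ → A}
    (h : ∀ m : ℕ, ∃ i : ℤ, m ≤ i ∧ x i ≠ y i) : {i | x i ≠ y i}.Infinite :=
  Set.infinite_of_forall_exists_gt fun a =>
    let ⟨i, hi, hne⟩ := h (a.toNat + 1)
    ⟨i, hne, by omega⟩

lemma isLiYorkePair_of_occursAt_iterate (hp : 2 ≤ p) (hlen : ∀ c, (τ c).length = p)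
    (hinj : Function.Injective τ) {v v' : List A} (hv : v.length = v'.length) (hvne : v ≠ v')
    {j : ℕ} (hj : j < v.length) (hj' : j < v'.length) (hco : v[j] = v'[j])
    {x y : ℤ → A} (t : ℕ → ℤ) (ht : ∀ m : ℕ, (m : ℤ) < t m)
    (hx : ∀ m, OccursAt x ((substWord τ)^[m] v) (t m))
    (hy : ∀ m, OccursAt y ((substWord τ)^[m] v') (t m)) :
    IsLiYorkePair x y := by
  refine ⟨isProximalPair_of_forall_agree fun m => ⟨t m + j * p ^ m, ?_, fun k hk => ?_⟩,
    infinite_setOf_ne_of_forall_exists fun m => ?_⟩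
  · have := ht m
    have : (0 : ℤ) ≤ j * p ^ m := by positivity
    omega
  · have hxj := (hx m).iterate_substWord_getElem hlen hj
    have hyj := (hy m).iterate_substWord_getElem hlen hj'
    rw [hco] at hxj
    have hk' : k < ((substWord τ)^[m] [v'[j]]).length := by
      rw [length_iterate_substWord hlen, List.length_singleton, one_mul]
      exact hk.trans_lt (Nat.lt_pow_self (by omega))
    rw [hxj k hk', hyj k hk']
  · have hne : (substWord τ)^[m] v ≠ (substWord τ)^[m] v' :=
      ((substWord_injective (by omega) hlen hinj).iterate m).ne hvne
    obtain ⟨k, hk⟩ := (hx m).exists_ne (hy m)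
      (by rw [length_iterate_substWord hlen, length_iterate_substWord hlen, hv]) hne
    exact ⟨t m + k, by have := ht m; omega, hk⟩

end Subshift

theorem stmt10_general {A : Type*} [Inhabited A]
    (τ : A → List A) (p : ℕ) (hp : 2 ≤ p)
    (hlen : ∀ a : A, (τ a).length = p)
    (hinj : Function.Injective τ)
    (a b : A) (u v u' v' : List A)
    (hτa : τ a = u ++ a :: v) (hτb : τ b = u' ++ b :: v')
    (hu : u.length = u'.length) (hu0 : 0 < u.length)
    (hv : v.length = v'.length) (hvne : v ≠ v')
    (hco : ∃ j : ℕ, j < v.length ∧ v.getD j default = v'.getD j default)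
    (x y : ℤ → A)
    (hx : ∀ m j : ℕ, j < p ^ m →
      x (-((u.length : ℤ) * ∑ i ∈ Finset.range m, (p : ℤ) ^ i) + (j : ℤ)) =
        ((substWord τ)^[m] [a]).getD j default)
    (hy : ∀ m j : ℕ, j < p ^ m →
      y (-((u'.length : ℤ) * ∑ i ∈ Finset.range m, (p : ℤ) ^ i) + (j : ℤ)) =
        ((substWord τ)^[m] [b]).getD j default) :
    x ∈ XSet τ ∧ y ∈ XSet τ ∧ IsLiYorkePair x y := by
  have hℓp : u.length + 2 ≤ p := by
    have hv0 : v ≠ [] := by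
      rintro rfl
      exact hvne (List.length_eq_zero_iff.mp hv.symm).symm
    have := hlen a
    rw [hτa, List.length_append, List.length_cons] at this
    have := List.length_pos_iff.mpr hv0
    omega
  have hxa : ∀ m, OccursAt x ((substWord τ)^[m] [a]) (-iteratedPrefixLength u.length p m) :=
    fun m => .of_getD fun j hj => hx m j (by simpa [length_iterate_substWord hlen] using hj)
  have hyb : ∀ m, OccursAt y ((substWord τ)^[m] [b]) (-iteratedPrefixLength u'.length p m) :=
    fun m => .of_getD fun j hj => hy m j (by simpa [length_iterate_substWord hlen] using hj)
  have hyv := occursAt_iterate_suffix hlen hτb hyb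
  rw [← hu] at hyb hyv
  obtain ⟨j, hj, hcoj⟩ := hco
  rw [List.getD_eq_getElem _ _ hj, List.getD_eq_getElem _ _ (hv ▸ hj)] at hcoj
  refine ⟨mem_XSet_of_occursAt_iterate hlen hu0 hℓp hxa,
    mem_XSet_of_occursAt_iterate hlen hu0 hℓp hyb,
    isLiYorkePair_of_occursAt_iterate hp hlen hinj hv hvne hj (hv ▸ hj) hcoj _
      (fun m => ?_) (occursAt_iterate_suffix hlen hτa hxa) hyv⟩
  have := iteratedPrefixLength_add_lt_pow hℓp m
  omega

/-- Proposition 3.5 (sufficiency): from `τ(a) = u a v`, `τ(b) = u' b v'` with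
`|u| = |u'| > 0`, `|v| = |v'|`, `v ≠ v'` and a coincidence between `v` and
`v'`, the fixed-point-like sequences
`x = …τ²(u)τ(u)u . a v τ(v) τ²(v)…` and `y = …τ²(u')τ(u')u' . b v' τ(v') …`
belong to `X_τ` and form a Li–Yorke pair. Here `x` is characterized by the
fact that for every `m`, `τᵐ(a)` occurs in `x` on the window starting at
`-|u|·(1 + p + ⋯ + pᵐ⁻¹)` (and similarly for `y`). -/
theorem stmt10 {A : Type*} [Fintype A] [Inhabited A]
    (τ : A → List A) (p : ℕ) (hp : 2 ≤ p)
    (hlen : ∀ a : A, (τ a).length = p)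
    (hprim : IsPrimitive τ) (hinj : Function.Injective τ)
    (hinf : (XSet τ).Infinite)
    (a b : A) (hab : a ≠ b) (u v u' v' : List A)
    (hτa : τ a = u ++ a :: v) (hτb : τ b = u' ++ b :: v')
    (hu : u.length = u'.length) (hu0 : 0 < u.length)
    (hv : v.length = v'.length) (hvne : v ≠ v')
    (hco : ∃ j : ℕ, j < v.length ∧ v.getD j default = v'.getD j default)
    (x y : ℤ → A)
    (hx : ∀ m j : ℕ, j < p ^ m →
      x (-((u.length : ℤ) * ∑ i ∈ Finset.range m, (p : ℤ) ^ i) + (j : ℤ)) =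
        ((substWord τ)^[m] [a]).getD j default)
    (hy : ∀ m j : ℕ, j < p ^ m →
      y (-((u'.length : ℤ) * ∑ i ∈ Finset.range m, (p : ℤ) ^ i) + (j : ℤ)) =
        ((substWord τ)^[m] [b]).getD j default) :
    x ∈ XSet τ ∧ y ∈ XSet τ ∧ IsLiYorkePair x y :=
  stmt10_general τ p hp hlen hinj a b u v u' v' hτa hτb hu hu0 hv hvne hco x y hx hy
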